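/- Let R be a Prüfer domain with the weak factorization property, M an idempotent maximal ideal of R, and I a nondivisorial M-primary ideal. Then I = I^v M. -/

import Mathlib

open scoped nonZeroDivisors

noncomputable section

variable (R : Type*) [CommRing R] [IsDomain R]

abbrev LocAt (M : Ideal R) (hM : M.IsPrime) : Type _ :=
  Localization (@Ideal.primeCompl R _ M hM)

def MapAt (M : Ideal R) (hM : M.IsPrime) (I : Ideal R) : Ideal (LocAt R M hM) :=
  I.map (algebraMap R (LocAt R M hM))

def divClos (I : Ideal R) : FractionalIdeal R⁰ (FractionRing R) :=
  1 / (1 / (I : FractionalIdeal R⁰ (FractionRing R)))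

def Divisorial (I : Ideal R) : Prop :=
  divClos R I = (I : FractionalIdeal R⁰ (FractionRing R))

def DivisorialLoc (M : Ideal R) (hM : M.IsPrime) (A : Ideal (LocAt R M hM)) : Prop :=
  haveI : IsDomain (LocAt R M hM) :=
    IsLocalization.isDomain_localization (@Ideal.primeCompl_le_nonZeroDivisors R _ _ M hM)
  Divisorial (LocAt R M hM) A

def DivisorialAt (M : Ideal R) (hM : M.IsPrime) (I : Ideal R) : Prop :=
  DivisorialLoc R M hM (MapAt R M hM I)

def IsPruferDomain : Prop :=
  ∀ I : Ideal R, I ≠ ⊥ → I.FG → IsUnit (I : FractionalIdeal R⁰ (FractionRing R))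

def FiniteCharacter : Prop :=
  ∀ x : R, x ≠ 0 → {M : Ideal R | M.IsMaximal ∧ x ∈ M}.Finite

def HLocal : Prop :=
  FiniteCharacter R ∧
    ∀ P : Ideal R, P.IsPrime → P ≠ ⊥ → ∃! M : Ideal R, M.IsMaximal ∧ P ≤ M

def WeakFactorization : Prop :=
  ∀ I : Ideal R, I ≠ ⊥ → ∃ l : Multiset (Ideal R), (∀ M ∈ l, M.IsMaximal) ∧
    (I : FractionalIdeal R⁰ (FractionRing R)) =
      divClos R I * (l.map (fun M => (M : FractionalIdeal R⁰ (FractionRing R)))).prod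

def MSet (I : Ideal R) : Set (Ideal R) :=
  {M | ∃ h : M.IsMaximal, I ≤ M ∧ ¬ Divisorial R M ∧ ¬ DivisorialAt R M h.isPrime I}

def StrongFactorization : Prop :=
  letI := Classical.decEq (Ideal R)
  ∀ I : Ideal R, I ≠ ⊥ → ∃ S : Finset (Ideal R), ↑S = MSet R I ∧
    (I : FractionalIdeal R⁰ (FractionRing R)) =
      divClos R I * ∏ M ∈ S, (M : FractionalIdeal R⁰ (FractionRing R)) ∧
    ∀ M ∈ S, (I : FractionalIdeal R⁰ (FractionRing R)) ≠
      divClos R I * ∏ N ∈ S.erase M, (N : FractionalIdeal R⁰ (FractionRing R))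

def AlmostDedekind : Prop :=
  ∀ (M : Ideal R) (hM : M.IsMaximal),
    haveI : IsDomain (LocAt R M hM.isPrime) :=
      IsLocalization.isDomain_localization
        (@Ideal.primeCompl_le_nonZeroDivisors R _ _ M hM.isPrime)
    IsDiscreteValuationRing (LocAt R M hM.isPrime)

def vIdeal (I : Ideal R) : Ideal R :=
  Submodule.comap (Algebra.linearMap R (FractionRing R))
    (divClos R I : Submodule R (FractionRing R))

def traceIdeal (I : Ideal R) : Ideal R :=
  Submodule.comap (Algebra.linearMap R (FractionRing R))
    (((I : FractionalIdeal R⁰ (FractionRing R)) *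
        (1 / (I : FractionalIdeal R⁰ (FractionRing R))) :
      FractionalIdeal R⁰ (FractionRing R)) : Submodule R (FractionRing R))
lemma aux_prod_le_one {R : Type*} [CommRing R] [IsDomain R]
    (l : Multiset (Ideal R)) :
    (Multiset.map (fun N : Ideal R => (N : FractionalIdeal R⁰ (FractionRing R))) l).prod ≤ 1 := by
  induction l using Multiset.induction with
  | empty => simp
  | cons a s ih =>
    simp only [Multiset.map_cons, Multiset.prod_cons]
    calc (a : FractionalIdeal R⁰ (FractionRing R)) *
          (Multiset.map (fun N : Ideal R => (N : FractionalIdeal R⁰ (FractionRing R))) s).prod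
        ≤ (a : FractionalIdeal R⁰ (FractionRing R)) * 1 := mul_le_mul' le_rfl ih
      _ = (a : FractionalIdeal R⁰ (FractionRing R)) := mul_one _
      _ ≤ 1 := FractionalIdeal.coeIdeal_le_one

/-- In a Prüfer domain with the weak factorization property, if `M` is an idempotent maximal
ideal and `I` a nondivisorial `M`-primary ideal, then `I = I^v M`. -/
theorem stmt7 (hR : IsPruferDomain R) (hW : WeakFactorization R)
    (M : Ideal R) (hM : M.IsMaximal) (hid : M * M = M)
    (I : Ideal R) (hI : I ≠ ⊥) (hprim : I.IsPrimary) (hrad : I.radical = M)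
    (hnd : ¬ Divisorial R I) :
    (I : FractionalIdeal R⁰ (FractionRing R)) =
      divClos R I * (M : FractionalIdeal R⁰ (FractionRing R)) := by
  classical
  obtain ⟨l, hlmax, heq0⟩ := hW I hI
  have heq : (I : FractionalIdeal R⁰ (FractionRing R)) = divClos R I *
      (Multiset.map (fun N : Ideal R => (N : FractionalIdeal R⁰ (FractionRing R))) l).prod := by
    rw [heq0]; congr 1; simp [Multiset.bind_singleton]
  clear heq0
  have hK0 : (I : FractionalIdeal R⁰ (FractionRing R)) ≠ 0 :=
    FractionalIdeal.coeIdeal_ne_zero.mpr hI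
  have hKle1 : (I : FractionalIdeal R⁰ (FractionRing R)) ≤ 1 :=
    FractionalIdeal.coeIdeal_le_one
  have h1mem : (1 : FractionRing R) ∈
      (1 / (I : FractionalIdeal R⁰ (FractionRing R)) : FractionalIdeal R⁰ (FractionRing R)) := by
    rw [FractionalIdeal.mem_div_iff_of_ne_zero hK0]
    intro y hy
    rw [one_mul]
    exact hKle1 hy
  have h1K0 : (1 / (I : FractionalIdeal R⁰ (FractionRing R)) :
      FractionalIdeal R⁰ (FractionRing R)) ≠ 0 := by
    intro h0
    rw [h0] at h1mem
    simp at h1mem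
  have hdiv_le : divClos R I ≤ 1 := by
    intro x hx
    have hx' : x ∈ (1 / (1 / (I : FractionalIdeal R⁰ (FractionRing R))) :
        FractionalIdeal R⁰ (FractionRing R)) := hx
    rw [FractionalIdeal.mem_div_iff_of_ne_zero h1K0] at hx'
    have := hx' 1 h1mem
    rw [mul_one] at this
    exact this
  -- every maximal ideal in l equals M
  have hall : ∀ M' ∈ l, M' = M := by
    intro M' hM'
    have hM'max := hlmax M' hM'
    have hsplit : l = M' ::ₘ l.erase M' := (Multiset.cons_erase hM').symm
    have hle : (I : FractionalIdeal R⁰ (FractionRing R)) ≤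
        (M' : FractionalIdeal R⁰ (FractionRing R)) := by
      rw [heq, hsplit]
      simp only [Multiset.map_cons, Multiset.prod_cons]
      calc divClos R I * ((M' : FractionalIdeal R⁰ (FractionRing R)) *
            (Multiset.map (fun N : Ideal R => (N : FractionalIdeal R⁰ (FractionRing R)))
              (l.erase M')).prod)
          ≤ divClos R I * ((M' : FractionalIdeal R⁰ (FractionRing R)) * 1) :=
            mul_le_mul' le_rfl
              (mul_le_mul' le_rfl (aux_prod_le_one _))
        _ = divClos R I * (M' : FractionalIdeal R⁰ (FractionRing R)) := by rw [mul_one]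
        _ ≤ 1 * (M' : FractionalIdeal R⁰ (FractionRing R)) :=
            mul_le_mul' hdiv_le le_rfl
        _ = (M' : FractionalIdeal R⁰ (FractionRing R)) := one_mul _
    have hIle : I ≤ M' := (FractionalIdeal.coeIdeal_le_coeIdeal _).mp hle
    have hMle : M ≤ M' := hrad ▸ hM'max.isPrime.radical_le_iff.mpr hIle
    exact (hM.eq_of_le hM'max.ne_top hMle).symm
  -- l is nonempty
  have hlne : l ≠ 0 := by
    rintro rfl
    simp only [Multiset.map_zero, Multiset.prod_zero, mul_one] at heq
    exact hnd heq.symm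
  have hrepl : Multiset.map (fun N : Ideal R => (N : FractionalIdeal R⁰ (FractionRing R))) l =
      Multiset.replicate (Multiset.card l) (M : FractionalIdeal R⁰ (FractionRing R)) := by
    rw [Multiset.eq_replicate]
    refine ⟨by simp, ?_⟩
    intro x hx
    obtain ⟨N, hN, rfl⟩ := Multiset.mem_map.mp hx
    rw [hall N hN]
  have hMid : (M : FractionalIdeal R⁰ (FractionRing R)) *
      (M : FractionalIdeal R⁰ (FractionRing R)) = (M : FractionalIdeal R⁰ (FractionRing R)) := by
    rw [← FractionalIdeal.coeIdeal_mul, hid]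
  have hpow : ∀ n : ℕ, n ≠ 0 → (M : FractionalIdeal R⁰ (FractionRing R)) ^ n =
      (M : FractionalIdeal R⁰ (FractionRing R)) := by
    intro n hn
    induction n with
    | zero => exact absurd rfl hn
    | succ m ih =>
      rcases Nat.eq_zero_or_pos m with hm | hm
      · subst hm; simp
      · rw [pow_succ, ih hm.ne', hMid]
  have hcard : Multiset.card l ≠ 0 := by
    simpa [Multiset.card_eq_zero] using hlne
  rw [heq, hrepl, Multiset.prod_replicate, hpow _ hcard]
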